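/- arXiv:math/0008055 — 5 statements merged into one kernel-verified Lean document; each statement's English description precedes it below -/
import Mathlib

section
/- The element r = (1/2) H₁ ∧ E₁ + (1/2) H₂ ∧ E₂ + A ∧ B in 𝒜 ⊗ 𝒜 (where x ∧ y := x⊗y − y⊗x) satisfies the classical Yang–Baxter equation [r₁₂, r₁₃] + [r₁₂, r₂₃] + [r₁₃, r₂₃] = 0. -/
open TensorProduct

noncomputable section

variable {L : Type*} [LieRing L] [LieAlgebra ℂ L]

/-- the element x ⊗ y ⊗ 1 of U(L) ⊗ U(L) ⊗ U(L) -/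
def t12 (x y : L) :
    UniversalEnvelopingAlgebra ℂ L ⊗[ℂ]
      (UniversalEnvelopingAlgebra ℂ L ⊗[ℂ] UniversalEnvelopingAlgebra ℂ L) :=
  (UniversalEnvelopingAlgebra.ι ℂ x) ⊗ₜ ((UniversalEnvelopingAlgebra.ι ℂ y) ⊗ₜ 1)

/-- the element x ⊗ 1 ⊗ y -/
def t13 (x y : L) :
    UniversalEnvelopingAlgebra ℂ L ⊗[ℂ]
      (UniversalEnvelopingAlgebra ℂ L ⊗[ℂ] UniversalEnvelopingAlgebra ℂ L) :=
  (UniversalEnvelopingAlgebra.ι ℂ x) ⊗ₜ ((1 : UniversalEnvelopingAlgebra ℂ L) ⊗ₜ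
    (UniversalEnvelopingAlgebra.ι ℂ y))

/-- the element 1 ⊗ x ⊗ y -/
def t23 (x y : L) :
    UniversalEnvelopingAlgebra ℂ L ⊗[ℂ]
      (UniversalEnvelopingAlgebra ℂ L ⊗[ℂ] UniversalEnvelopingAlgebra ℂ L) :=
  (1 : UniversalEnvelopingAlgebra ℂ L) ⊗ₜ ((UniversalEnvelopingAlgebra.ι ℂ x) ⊗ₜ
    (UniversalEnvelopingAlgebra.ι ℂ y))

/-- x ∧ y placed in slots 1,2 -/
def w12 (x y : L) := t12 x y - t12 y x
/-- x ∧ y placed in slots 1,3 -/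
def w13 (x y : L) := t13 x y - t13 y x
/-- x ∧ y placed in slots 2,3 -/
def w23 (x y : L) := t23 x y - t23 y x

/-- the element x ⊗ y ⊗ z -/
def fthree (x y z : L) :
    UniversalEnvelopingAlgebra ℂ L ⊗[ℂ]
      (UniversalEnvelopingAlgebra ℂ L ⊗[ℂ] UniversalEnvelopingAlgebra ℂ L) :=
  (UniversalEnvelopingAlgebra.ι ℂ x) ⊗ₜ ((UniversalEnvelopingAlgebra.ι ℂ y) ⊗ₜ
    (UniversalEnvelopingAlgebra.ι ℂ z))

lemma lie_t12_t13 (x y u v : L) : ⁅t12 x y, t13 u v⁆ = fthree ⁅x,u⁆ y v := by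
  simp only [t12, t13, fthree, Ring.lie_def, Algebra.TensorProduct.tmul_mul_tmul,
    one_mul, mul_one, LieHom.map_lie, Ring.lie_def, sub_tmul]

lemma lie_t12_t23 (x y u v : L) : ⁅t12 x y, t23 u v⁆ = fthree x ⁅y,u⁆ v := by
  simp only [t12, t23, fthree, Ring.lie_def, Algebra.TensorProduct.tmul_mul_tmul,
    one_mul, mul_one, LieHom.map_lie, Ring.lie_def, sub_tmul, tmul_sub]

lemma lie_t13_t23 (x y u v : L) : ⁅t13 x y, t23 u v⁆ = fthree x u ⁅y,v⁆ := by
  simp only [t13, t23, fthree, Ring.lie_def, Algebra.TensorProduct.tmul_mul_tmul,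
    one_mul, mul_one, LieHom.map_lie, Ring.lie_def, sub_tmul, tmul_sub]

lemma fthree_smul₁ (c : ℂ) (x y z : L) : fthree (c • x) y z = c • fthree x y z := by
  unfold fthree; rw [map_smul, ← smul_tmul']

lemma fthree_smul₂ (c : ℂ) (x y z : L) : fthree x (c • y) z = c • fthree x y z := by
  unfold fthree; rw [map_smul, ← smul_tmul', tmul_smul]

lemma fthree_smul₃ (c : ℂ) (x y z : L) : fthree x y (c • z) = c • fthree x y z := by
  unfold fthree; rw [map_smul, tmul_smul, tmul_smul]

lemma fthree_neg₁ (x y z : L) : fthree (-x) y z = - fthree x y z := by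
  unfold fthree; rw [map_neg, neg_tmul]

lemma fthree_neg₂ (x y z : L) : fthree x (-y) z = - fthree x y z := by
  unfold fthree; rw [map_neg, neg_tmul, tmul_neg]

lemma fthree_neg₃ (x y z : L) : fthree x y (-z) = - fthree x y z := by
  unfold fthree; rw [map_neg, tmul_neg, tmul_neg]

lemma fthree_zero₁ (y z : L) : fthree (0 : L) y z = 0 := by
  rw [fthree]; simp

lemma fthree_zero₂ (x z : L) : fthree x (0 : L) z = 0 := by
  rw [fthree]; simp

lemma fthree_zero₃ (x y : L) : fthree x y (0 : L) = 0 := by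
  rw [fthree]; simp

lemma myadd_lie (x y z : UniversalEnvelopingAlgebra ℂ L ⊗[ℂ]
    (UniversalEnvelopingAlgebra ℂ L ⊗[ℂ] UniversalEnvelopingAlgebra ℂ L)) :
    ⁅x + y, z⁆ = ⁅x, z⁆ + ⁅y, z⁆ := by
  simp only [Ring.lie_def, add_mul, mul_add]; abel

lemma mylie_add (x y z : UniversalEnvelopingAlgebra ℂ L ⊗[ℂ]
    (UniversalEnvelopingAlgebra ℂ L ⊗[ℂ] UniversalEnvelopingAlgebra ℂ L)) :
    ⁅x, y + z⁆ = ⁅x, y⁆ + ⁅x, z⁆ := by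
  simp only [Ring.lie_def, add_mul, mul_add]; abel

lemma mysub_lie (x y z : UniversalEnvelopingAlgebra ℂ L ⊗[ℂ]
    (UniversalEnvelopingAlgebra ℂ L ⊗[ℂ] UniversalEnvelopingAlgebra ℂ L)) :
    ⁅x - y, z⁆ = ⁅x, z⁆ - ⁅y, z⁆ := by
  simp only [Ring.lie_def, sub_mul, mul_sub]; abel

lemma mylie_sub (x y z : UniversalEnvelopingAlgebra ℂ L ⊗[ℂ]
    (UniversalEnvelopingAlgebra ℂ L ⊗[ℂ] UniversalEnvelopingAlgebra ℂ L)) :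
    ⁅x, y - z⁆ = ⁅x, y⁆ - ⁅x, z⁆ := by
  simp only [Ring.lie_def, sub_mul, mul_sub]; abel

lemma mysmul_lie (c : ℂ) (x z : UniversalEnvelopingAlgebra ℂ L ⊗[ℂ]
    (UniversalEnvelopingAlgebra ℂ L ⊗[ℂ] UniversalEnvelopingAlgebra ℂ L)) :
    ⁅c • x, z⁆ = c • ⁅x, z⁆ := by
  simp only [Ring.lie_def, smul_mul_assoc, mul_smul_comm, smul_sub]

lemma mylie_smul (c : ℂ) (x z : UniversalEnvelopingAlgebra ℂ L ⊗[ℂ]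
    (UniversalEnvelopingAlgebra ℂ L ⊗[ℂ] UniversalEnvelopingAlgebra ℂ L)) :
    ⁅x, c • z⁆ = c • ⁅x, z⁆ := by
  simp only [Ring.lie_def, smul_mul_assoc, mul_smul_comm, smul_sub]

/-- r = (1/2)H₁∧E₁ + (1/2)H₂∧E₂ + A∧B satisfies the classical
Yang–Baxter equation [r₁₂,r₁₃] + [r₁₂,r₂₃] + [r₁₃,r₂₃] = 0 in U(𝒜)⊗U(𝒜)⊗U(𝒜). -/
theorem stmt2 (H₁ H₂ E₁ E₂ A B : L)
    (h1 : ⁅H₁, E₁⁆ = (2 : ℂ) • E₁) (h2 : ⁅H₂, E₂⁆ = (2 : ℂ) • E₂)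
    (h3 : ⁅H₁, H₂⁆ = 0) (h4 : ⁅E₁, E₂⁆ = 0) (h5 : ⁅H₁, E₂⁆ = 0) (h6 : ⁅H₂, E₁⁆ = 0)
    (h7 : ⁅H₁, A⁆ = -A) (h8 : ⁅H₁, B⁆ = B) (h9 : ⁅H₂, A⁆ = A) (h10 : ⁅H₂, B⁆ = B)
    (h11 : ⁅A, E₁⁆ = (2 : ℂ) • B) (h12 : ⁅A, E₂⁆ = 0) (h13 : ⁅E₁, B⁆ = 0)
    (h14 : ⁅E₂, B⁆ = 0) (h15 : ⁅A, B⁆ = E₂) :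
    let r₁₂ := ((1 : ℂ)/2) • w12 H₁ E₁ + ((1 : ℂ)/2) • w12 H₂ E₂ + w12 A B
    let r₁₃ := ((1 : ℂ)/2) • w13 H₁ E₁ + ((1 : ℂ)/2) • w13 H₂ E₂ + w13 A B
    let r₂₃ := ((1 : ℂ)/2) • w23 H₁ E₁ + ((1 : ℂ)/2) • w23 H₂ E₂ + w23 A B
    ⁅r₁₂, r₁₃⁆ + ⁅r₁₂, r₂₃⁆ + ⁅r₁₃, r₂₃⁆ = 0 := by
  intro r₁₂ r₁₃ r₂₃
  have h1' : ⁅E₁, H₁⁆ = -((2 : ℂ) • E₁) := by rw [← lie_skew, h1]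
  have h2' : ⁅E₂, H₂⁆ = -((2 : ℂ) • E₂) := by rw [← lie_skew, h2]
  have h3' : ⁅H₂, H₁⁆ = 0 := by rw [← lie_skew, h3, neg_zero]
  have h4' : ⁅E₂, E₁⁆ = 0 := by rw [← lie_skew, h4, neg_zero]
  have h5' : ⁅E₂, H₁⁆ = 0 := by rw [← lie_skew, h5, neg_zero]
  have h6' : ⁅E₁, H₂⁆ = 0 := by rw [← lie_skew, h6, neg_zero]
  have h7' : ⁅A, H₁⁆ = A := by rw [← lie_skew, h7, neg_neg]
  have h8' : ⁅B, H₁⁆ = -B := by rw [← lie_skew, h8]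
  have h9' : ⁅A, H₂⁆ = -A := by rw [← lie_skew, h9]
  have h10' : ⁅B, H₂⁆ = -B := by rw [← lie_skew, h10]
  have h11' : ⁅E₁, A⁆ = -((2 : ℂ) • B) := by rw [← lie_skew, h11]
  have h12' : ⁅E₂, A⁆ = 0 := by rw [← lie_skew, h12, neg_zero]
  have h13' : ⁅B, E₁⁆ = 0 := by rw [← lie_skew, h13, neg_zero]
  have h14' : ⁅B, E₂⁆ = 0 := by rw [← lie_skew, h14, neg_zero]
  have h15' : ⁅B, A⁆ = -E₂ := by rw [← lie_skew, h15]
  simp only [r₁₂, r₁₃, r₂₃, w12, w13, w23]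
  simp (config := { maxSteps := 10000000 }) only [myadd_lie, mysub_lie, mysmul_lie, mylie_add, mylie_sub, mylie_smul]
  simp only [lie_t12_t13, lie_t12_t23, lie_t13_t23]
  simp only [h1, h2, h3, h4, h5, h6, h7, h8, h9, h10, h11, h12, h13, h14, h15,
    h1', h2', h3', h4', h5', h6', h7', h8', h9', h10', h11', h12', h13', h14', h15',
    lie_self]
  simp only [fthree_smul₁, fthree_smul₂, fthree_smul₃, fthree_neg₁, fthree_neg₂,
    fthree_neg₃, fthree_zero₁, fthree_zero₂, fthree_zero₃, smul_neg, smul_zero,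
    neg_zero, sub_zero, zero_sub, add_zero, zero_add, smul_smul]
  module
end
end

section
/- In sp(2n,ℂ) with n ≥ 2, with basis Z_{ab} (a,b = ±1,…,±n) satisfying Z_{ab} = −sign(ab) Z_{−b,−a} and [Z_{ab}, Z_{cd}] = sign(bc)(Z_{ad}δ_{bc} + Z_{−b,−c}δ_{ad} + Z_{a,−c}δ_{−b,d} + Z_{−b,d}δ_{c,−a}), the elements H₁ = Σ_{k=2}^{n} Z_{kk}, E₁ = Σ_{k=2}^{n} Z_{k,−k}, H₂ = Z_{11}, E₂ = Z_{1,−1}, A = Σ_{k=2}^{n} a^k Z_{1k}, B = Σ_{k=2}^{n} a^k Z_{k,−1}, where Σ_{k=2}^{n} (a^k)² = 1, satisfy all the defining relations of the six-dimensional Lie algebra 𝒜. -/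
/-- in sp(2n,ℂ), n ≥ 2, presented by generators Z_{ab}
(a,b = ±1,…,±n) with Z_{ab} = −sign(ab) Z_{−b,−a} and the canonical brackets,
the stated elements with Σ (aᵏ)² = 1 realize the six-dimensional algebra 𝒜. -/
theorem stmt5 {L : Type*} [LieRing L] [LieAlgebra ℂ L]
    (n : ℕ) (hn : 2 ≤ n) (Z : ℤ → ℤ → L) (a : ℤ → ℂ)
    (hsym : ∀ p q : ℤ, p ≠ 0 → |p| ≤ n → q ≠ 0 → |q| ≤ n →
      Z p q = -(((p * q).sign : ℂ)) • Z (-q) (-p))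
    (hbr : ∀ p q r s : ℤ, p ≠ 0 → |p| ≤ n → q ≠ 0 → |q| ≤ n →
        r ≠ 0 → |r| ≤ n → s ≠ 0 → |s| ≤ n →
      ⁅Z p q, Z r s⁆ = (((q * r).sign : ℂ)) •
        ((if q = r then Z p s else 0) + (if p = s then Z (-q) (-r) else 0)
          + (if -q = s then Z p (-r) else 0) + (if r = -p then Z (-q) s else 0)))
    (ha : ∑ k ∈ Finset.Icc (2 : ℤ) n, (a k) ^ 2 = 1) :
    let H₁ := ∑ k ∈ Finset.Icc (2 : ℤ) n, Z k k
    let E₁ := ∑ k ∈ Finset.Icc (2 : ℤ) n, Z k (-k)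
    let H₂ := Z 1 1
    let E₂ := Z 1 (-1)
    let A := ∑ k ∈ Finset.Icc (2 : ℤ) n, a k • Z 1 k
    let B := ∑ k ∈ Finset.Icc (2 : ℤ) n, a k • Z k (-1)
    ⁅H₁, E₁⁆ = (2 : ℂ) • E₁ ∧ ⁅H₂, E₂⁆ = (2 : ℂ) • E₂ ∧
    ⁅H₁, H₂⁆ = 0 ∧ ⁅E₁, E₂⁆ = 0 ∧ ⁅H₁, E₂⁆ = 0 ∧ ⁅H₂, E₁⁆ = 0 ∧
    ⁅H₁, A⁆ = -A ∧ ⁅H₁, B⁆ = B ∧ ⁅H₂, A⁆ = A ∧ ⁅H₂, B⁆ = B ∧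
    ⁅A, E₁⁆ = (2 : ℂ) • B ∧ ⁅A, E₂⁆ = 0 ∧ ⁅E₁, B⁆ = 0 ∧ ⁅E₂, B⁆ = 0 ∧
    ⁅A, B⁆ = E₂ := by
  intro H₁ E₁ H₂ E₂ A B
  have hH₁ : H₁ = ∑ k ∈ Finset.Icc (2 : ℤ) n, Z k k := rfl
  have hE₁ : E₁ = ∑ k ∈ Finset.Icc (2 : ℤ) n, Z k (-k) := rfl
  have hH₂ : H₂ = Z 1 1 := rfl
  have hE₂ : E₂ = Z 1 (-1) := rfl
  have hA : A = ∑ k ∈ Finset.Icc (2 : ℤ) n, a k • Z 1 k := rfl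
  have hB : B = ∑ k ∈ Finset.Icc (2 : ℤ) n, a k • Z k (-1) := rfl
  rw [hH₁, hE₁, hH₂, hE₂, hA, hB]
  have hn' : (2 : ℤ) ≤ (n : ℤ) := by exact_mod_cast hn
  have P1 : (1 : ℤ) ≠ 0 ∧ |(1 : ℤ)| ≤ (n : ℤ) := ⟨one_ne_zero, by rw [abs_one]; omega⟩
  have Pm1 : (-1 : ℤ) ≠ 0 ∧ |(-1 : ℤ)| ≤ (n : ℤ) := ⟨by norm_num, by rw [abs_neg, abs_one]; omega⟩
  have Pk : ∀ k : ℤ, 2 ≤ k → k ≤ n → k ≠ 0 ∧ |k| ≤ (n : ℤ) :=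
    fun k h h' => ⟨by omega, by rw [abs_le]; omega⟩
  have Pnk : ∀ k : ℤ, 2 ≤ k → k ≤ n → -k ≠ 0 ∧ |(-k : ℤ)| ≤ (n : ℤ) :=
    fun k h h' => ⟨by omega, by rw [abs_le]; omega⟩
  have hsign : ∀ m : ℤ, 0 < m → ((m.sign : ℂ)) = 1 := fun m hm => by
    rw [Int.sign_eq_one_of_pos hm, Int.cast_one]
  have lie_sum : ∀ (x : L) (s : Finset ℤ) (f : ℤ → L),
      ⁅x, ∑ i ∈ s, f i⁆ = ∑ i ∈ s, ⁅x, f i⁆ := by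
    intro x s f
    classical
    induction s using Finset.induction_on with
    | empty => simp
    | insert _ _ h ih => rw [Finset.sum_insert h, Finset.sum_insert h, lie_add, ih]
  have sum_lie : ∀ (s : Finset ℤ) (f : ℤ → L) (x : L),
      ⁅∑ i ∈ s, f i, x⁆ = ∑ i ∈ s, ⁅f i, x⁆ := by
    intro s f x
    classical
    induction s using Finset.induction_on with
    | empty => simp
    | insert _ _ h ih => rw [Finset.sum_insert h, Finset.sum_insert h, add_lie, ih]
  -- Z (-k) (-1) = - Z 1 k  for 2 ≤ k ≤ n
  have hZneg : ∀ k : ℤ, 2 ≤ k → k ≤ n → Z (-k) (-1) = -(Z 1 k) := by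
    intro k h h'
    rw [hsym (-k) (-1) (Pnk k h h').1 (Pnk k h h').2 Pm1.1 Pm1.2]
    simp [hsign k (by omega)]
  -- Z 1 (-k) = Z k (-1) for 2 ≤ k ≤ n
  have hZflip : ∀ k : ℤ, 2 ≤ k → k ≤ n → Z 1 (-k) = Z k (-1) := by
    intro k h h'
    rw [hsym 1 (-k) P1.1 P1.2 (Pnk k h h').1 (Pnk k h h').2]
    simp [hsign k (by omega), Int.sign_eq_neg_one_of_neg (show (1 * -k : ℤ) < 0 by omega)]
  refine ⟨?_, ?_, ?_, ?_, ?_, ?_, ?_, ?_, ?_, ?_, ?_, ?_, ?_, ?_, ?_⟩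
  · -- ⁅H₁, E₁⁆ = 2 • E₁
    rw [sum_lie, Finset.smul_sum]
    refine Finset.sum_congr rfl fun k hk => ?_
    obtain ⟨hk1, hk2⟩ := Finset.mem_Icc.mp hk
    rw [lie_sum]
    rw [Finset.sum_congr rfl (fun l hl => ?_), Finset.sum_ite_eq _ k
      (fun l => (2 : ℂ) • Z l (-l)), if_pos hk]
    obtain ⟨hl1, hl2⟩ := Finset.mem_Icc.mp hl
    rw [hbr k k l (-l) (Pk k hk1 hk2).1 (Pk k hk1 hk2).2 (Pk k hk1 hk2).1 (Pk k hk1 hk2).2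
      (Pk l hl1 hl2).1 (Pk l hl1 hl2).2 (Pnk l hl1 hl2).1 (Pnk l hl1 hl2).2]
    by_cases h : k = l
    · subst h
      rw [hsign _ (by nlinarith)]
      simp [(show k ≠ -k by omega), two_smul]
    · simp [h, (show k ≠ -l by omega), (show -k ≠ -l by omega), (show l ≠ -k by omega)]
  · -- ⁅H₂, E₂⁆ = 2 • E₂
    rw [hbr 1 1 1 (-1) P1.1 P1.2 P1.1 P1.2 P1.1 P1.2 Pm1.1 Pm1.2]
    rw [hsign _ (by norm_num)]
    simp [(show (1 : ℤ) ≠ -1 by norm_num), two_smul]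
  · -- ⁅H₁, H₂⁆ = 0
    rw [sum_lie]
    refine Finset.sum_eq_zero fun k hk => ?_
    obtain ⟨hk1, hk2⟩ := Finset.mem_Icc.mp hk
    rw [hbr k k 1 1 (Pk k hk1 hk2).1 (Pk k hk1 hk2).2 (Pk k hk1 hk2).1 (Pk k hk1 hk2).2
      P1.1 P1.2 P1.1 P1.2]
    simp [(show k ≠ 1 by omega), (show -k ≠ 1 by omega), (show (1 : ℤ) ≠ -k by omega)]
  · -- ⁅E₁, E₂⁆ = 0
    rw [sum_lie]
    refine Finset.sum_eq_zero fun k hk => ?_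
    obtain ⟨hk1, hk2⟩ := Finset.mem_Icc.mp hk
    rw [hbr k (-k) 1 (-1) (Pk k hk1 hk2).1 (Pk k hk1 hk2).2 (Pnk k hk1 hk2).1 (Pnk k hk1 hk2).2
      P1.1 P1.2 Pm1.1 Pm1.2]
    simp [(show -k ≠ 1 by omega), (show k ≠ -1 by omega), (show (1 : ℤ) ≠ -k by omega)]
  · -- ⁅H₁, E₂⁆ = 0
    rw [sum_lie]
    refine Finset.sum_eq_zero fun k hk => ?_
    obtain ⟨hk1, hk2⟩ := Finset.mem_Icc.mp hk
    rw [hbr k k 1 (-1) (Pk k hk1 hk2).1 (Pk k hk1 hk2).2 (Pk k hk1 hk2).1 (Pk k hk1 hk2).2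
      P1.1 P1.2 Pm1.1 Pm1.2]
    simp [(show k ≠ 1 by omega), (show k ≠ -1 by omega), (show -k ≠ -1 by omega), (show (1 : ℤ) ≠ -k by omega)]
  · -- ⁅H₂, E₁⁆ = 0
    rw [lie_sum]
    refine Finset.sum_eq_zero fun l hl => ?_
    obtain ⟨hl1, hl2⟩ := Finset.mem_Icc.mp hl
    rw [hbr 1 1 l (-l) P1.1 P1.2 P1.1 P1.2 (Pk l hl1 hl2).1 (Pk l hl1 hl2).2
      (Pnk l hl1 hl2).1 (Pnk l hl1 hl2).2]
    simp [(show (1 : ℤ) ≠ l by omega), (show (1 : ℤ) ≠ -l by omega), (show (-1 : ℤ) ≠ -l by omega),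
      (show l ≠ -1 by omega)]
  · -- ⁅H₁, A⁆ = -A
    rw [sum_lie, ← Finset.sum_neg_distrib]
    refine Finset.sum_congr rfl fun k hk => ?_
    obtain ⟨hk1, hk2⟩ := Finset.mem_Icc.mp hk
    rw [lie_sum]
    rw [Finset.sum_congr rfl (fun l hl => ?_), Finset.sum_ite_eq _ k
      (fun l => -(a l • Z 1 l)), if_pos hk]
    obtain ⟨hl1, hl2⟩ := Finset.mem_Icc.mp hl
    rw [lie_smul, hbr k k 1 l (Pk k hk1 hk2).1 (Pk k hk1 hk2).2 (Pk k hk1 hk2).1 (Pk k hk1 hk2).2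
      P1.1 P1.2 (Pk l hl1 hl2).1 (Pk l hl1 hl2).2]
    by_cases h : k = l
    · subst h
      rw [hsign _ (by omega)]
      simp [(show k ≠ 1 by omega), (show -k ≠ k by omega), (show (1 : ℤ) ≠ -k by omega),
        hZneg k hk1 hk2]
    · simp [h, (show k ≠ 1 by omega), (show -k ≠ l by omega), (show (1 : ℤ) ≠ -k by omega)]
  · -- ⁅H₁, B⁆ = B
    rw [sum_lie]
    refine Finset.sum_congr rfl fun k hk => ?_
    obtain ⟨hk1, hk2⟩ := Finset.mem_Icc.mp hk
    rw [lie_sum]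
    rw [Finset.sum_congr rfl (fun l hl => ?_), Finset.sum_ite_eq _ k
      (fun l => a l • Z l (-1)), if_pos hk]
    obtain ⟨hl1, hl2⟩ := Finset.mem_Icc.mp hl
    rw [lie_smul, hbr k k l (-1) (Pk k hk1 hk2).1 (Pk k hk1 hk2).2 (Pk k hk1 hk2).1 (Pk k hk1 hk2).2
      (Pk l hl1 hl2).1 (Pk l hl1 hl2).2 Pm1.1 Pm1.2]
    by_cases h : k = l
    · subst h
      rw [hsign _ (by nlinarith)]
      simp [(show k ≠ -1 by omega), (show -k ≠ -1 by omega), (show k ≠ -k by omega)]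
    · simp [h, (show k ≠ -1 by omega), (show -k ≠ -1 by omega), (show l ≠ -k by omega)]
  · -- ⁅H₂, A⁆ = A
    rw [lie_sum]
    refine Finset.sum_congr rfl fun l hl => ?_
    obtain ⟨hl1, hl2⟩ := Finset.mem_Icc.mp hl
    rw [lie_smul, hbr 1 1 1 l P1.1 P1.2 P1.1 P1.2 P1.1 P1.2 (Pk l hl1 hl2).1 (Pk l hl1 hl2).2]
    rw [hsign _ (by norm_num)]
    simp [(show (1 : ℤ) ≠ l by omega), (show (-1 : ℤ) ≠ l by omega), (show (1 : ℤ) ≠ -1 by norm_num)]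
  · -- ⁅H₂, B⁆ = B
    rw [lie_sum]
    refine Finset.sum_congr rfl fun l hl => ?_
    obtain ⟨hl1, hl2⟩ := Finset.mem_Icc.mp hl
    rw [lie_smul, hbr 1 1 l (-1) P1.1 P1.2 P1.1 P1.2 (Pk l hl1 hl2).1 (Pk l hl1 hl2).2
      Pm1.1 Pm1.2]
    rw [hsign _ (by omega)]
    simp [(show (1 : ℤ) ≠ l by omega), (show (1 : ℤ) ≠ -1 by norm_num), (show l ≠ -1 by omega),
      hZflip l hl1 hl2]
  · -- ⁅A, E₁⁆ = 2 • B
    rw [sum_lie, Finset.smul_sum]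
    refine Finset.sum_congr rfl fun k hk => ?_
    obtain ⟨hk1, hk2⟩ := Finset.mem_Icc.mp hk
    rw [smul_lie, lie_sum, Finset.smul_sum]
    rw [Finset.sum_congr rfl (fun l hl => ?_), Finset.sum_ite_eq _ k
      (fun l => (2 : ℂ) • (a l • Z l (-1))), if_pos hk]
    obtain ⟨hl1, hl2⟩ := Finset.mem_Icc.mp hl
    rw [hbr 1 k l (-l) P1.1 P1.2 (Pk k hk1 hk2).1 (Pk k hk1 hk2).2 (Pk l hl1 hl2).1
      (Pk l hl1 hl2).2 (Pnk l hl1 hl2).1 (Pnk l hl1 hl2).2]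
    by_cases h : k = l
    · subst h
      rw [hsign _ (by nlinarith)]
      simp [(show (1 : ℤ) ≠ -k by omega), (show k ≠ -1 by omega), hZflip k hk1 hk2, two_smul,
        smul_add]
    · simp [h, (show (1 : ℤ) ≠ -l by omega), (show -k ≠ -l by omega), (show l ≠ -1 by omega)]
  · -- ⁅A, E₂⁆ = 0
    rw [sum_lie]
    refine Finset.sum_eq_zero fun k hk => ?_
    obtain ⟨hk1, hk2⟩ := Finset.mem_Icc.mp hk
    rw [smul_lie, hbr 1 k 1 (-1) P1.1 P1.2 (Pk k hk1 hk2).1 (Pk k hk1 hk2).2 P1.1 P1.2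
      Pm1.1 Pm1.2]
    simp [(show k ≠ 1 by omega), (show (1 : ℤ) ≠ -1 by norm_num), (show -k ≠ -1 by omega)]
  · -- ⁅E₁, B⁆ = 0
    rw [sum_lie]
    refine Finset.sum_eq_zero fun k hk => ?_
    obtain ⟨hk1, hk2⟩ := Finset.mem_Icc.mp hk
    rw [lie_sum]
    refine Finset.sum_eq_zero fun l hl => ?_
    obtain ⟨hl1, hl2⟩ := Finset.mem_Icc.mp hl
    rw [lie_smul, hbr k (-k) l (-1) (Pk k hk1 hk2).1 (Pk k hk1 hk2).2 (Pnk k hk1 hk2).1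
      (Pnk k hk1 hk2).2 (Pk l hl1 hl2).1 (Pk l hl1 hl2).2 Pm1.1 Pm1.2]
    simp [(show -k ≠ l by omega), (show k ≠ -1 by omega), (show l ≠ -k by omega)]
  · -- ⁅E₂, B⁆ = 0
    rw [lie_sum]
    refine Finset.sum_eq_zero fun l hl => ?_
    obtain ⟨hl1, hl2⟩ := Finset.mem_Icc.mp hl
    rw [lie_smul, hbr 1 (-1) l (-1) P1.1 P1.2 Pm1.1 Pm1.2 (Pk l hl1 hl2).1 (Pk l hl1 hl2).2
      Pm1.1 Pm1.2]
    simp [(show (-1 : ℤ) ≠ l by omega), (show (1 : ℤ) ≠ -1 by norm_num), (show l ≠ -1 by omega)]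
  · -- ⁅A, B⁆ = E₂
    rw [sum_lie]
    have step : ∀ k ∈ Finset.Icc (2 : ℤ) n,
        ⁅a k • Z 1 k, ∑ l ∈ Finset.Icc (2 : ℤ) n, a l • Z l (-1)⁆ = (a k) ^ 2 • Z 1 (-1) := by
      intro k hk
      obtain ⟨hk1, hk2⟩ := Finset.mem_Icc.mp hk
      rw [smul_lie, lie_sum, Finset.smul_sum]
      rw [Finset.sum_congr rfl (fun l hl => ?_), Finset.sum_ite_eq _ k
        (fun l => (a l) ^ 2 • Z 1 (-1)), if_pos hk]
      obtain ⟨hl1, hl2⟩ := Finset.mem_Icc.mp hl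
      rw [lie_smul, hbr 1 k l (-1) P1.1 P1.2 (Pk k hk1 hk2).1 (Pk k hk1 hk2).2
        (Pk l hl1 hl2).1 (Pk l hl1 hl2).2 Pm1.1 Pm1.2]
      by_cases h : k = l
      · subst h
        rw [hsign _ (by nlinarith)]
        simp [(show (1 : ℤ) ≠ -1 by omega), (show -k ≠ -1 by omega), (show k ≠ -1 by omega),
          smul_smul, sq]
      · simp [h, (show (1 : ℤ) ≠ -1 by omega), (show -k ≠ -1 by omega), (show l ≠ -1 by omega)]
    rw [Finset.sum_congr rfl step, ← Finset.sum_smul, ha, one_smul]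
end

section
/- If an invertible element 𝓕 ∈ H₀ ⊗ H₀ of a Hopf algebra H₀ satisfies the factorization identities (Δ₀ ⊗ id)(𝓕) = 𝓕₁₃ 𝓕₂₃ and (id ⊗ Δ)(𝓕) = 𝓕₁₂ 𝓕₁₃, where Δ = 𝓕 Δ₀ 𝓕⁻¹, then 𝓕 satisfies the cocycle condition 𝓕₁₂ (Δ₀ ⊗ id)(𝓕) = 𝓕₂₃ (id ⊗ Δ₀)(𝓕). -/
open TensorProduct

/-- if an invertible 𝓕 ∈ H₀⊗H₀ satisfies the factorization identities
(Δ₀⊗id)(𝓕) = 𝓕₁₃𝓕₂₃ and (id⊗Δ)(𝓕) = 𝓕₁₂𝓕₁₃ (with Δ = 𝓕Δ₀𝓕⁻¹), then 𝓕 satisfies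
the twist cocycle condition 𝓕₁₂(Δ₀⊗id)(𝓕) = 𝓕₂₃(id⊗Δ₀)(𝓕). -/
theorem stmt6 {K : Type*} [Field K] {H : Type*} [Ring H] [HopfAlgebra K H]
    (F Finv : H ⊗[K] H) (hinv₁ : F * Finv = 1) (hinv₂ : Finv * F = 1) :
    let D₁ : H ⊗[K] H →ₗ[K] H ⊗[K] (H ⊗[K] H) :=
      (TensorProduct.assoc K H H H).toLinearMap ∘ₗ
        (TensorProduct.map Coalgebra.comul LinearMap.id)
    let D₂ : H ⊗[K] H →ₗ[K] H ⊗[K] (H ⊗[K] H) :=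
      TensorProduct.map LinearMap.id Coalgebra.comul
    let Δ : H →ₗ[K] H ⊗[K] H :=
      LinearMap.mulLeft K F ∘ₗ LinearMap.mulRight K Finv ∘ₗ Coalgebra.comul
    let F₁₂ : H ⊗[K] (H ⊗[K] H) :=
      (Algebra.TensorProduct.map (AlgHom.id K H) Algebra.TensorProduct.includeLeft) F
    let F₁₃ : H ⊗[K] (H ⊗[K] H) :=
      (Algebra.TensorProduct.map (AlgHom.id K H) Algebra.TensorProduct.includeRight) F
    let F₂₃ : H ⊗[K] (H ⊗[K] H) := Algebra.TensorProduct.includeRight F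
    D₁ F = F₁₃ * F₂₃ →
    (TensorProduct.map LinearMap.id Δ) F = F₁₂ * F₁₃ →
    F₁₂ * D₁ F = F₂₃ * D₂ F := by
  intro D₁ D₂ Δ F₁₂ F₁₃ F₂₃ h1 h2
  have keyL : ∀ (G : H ⊗[K] H) (x : H ⊗[K] (H ⊗[K] H)),
      (TensorProduct.map LinearMap.id (LinearMap.mulLeft K G)) x = ((1:H) ⊗ₜ[K] G) * x := by
    intro G x
    induction x using TensorProduct.induction_on with
    | zero => simp
    | tmul a y =>
      induction G using TensorProduct.induction_on with
      | zero => simp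
      | tmul f g => simp [Algebra.TensorProduct.tmul_mul_tmul]
      | add p q hp hq =>
        simp only [TensorProduct.map_tmul] at hp hq
        simp [TensorProduct.tmul_add, add_mul, mul_add, hp, hq]
    | add x y hx hy => simp [mul_add, hx, hy]
  have keyR : ∀ (G : H ⊗[K] H) (x : H ⊗[K] (H ⊗[K] H)),
      (TensorProduct.map LinearMap.id (LinearMap.mulRight K G)) x = x * ((1:H) ⊗ₜ[K] G) := by
    intro G x
    induction x using TensorProduct.induction_on with
    | zero => simp
    | tmul a y =>
      induction G using TensorProduct.induction_on with
      | zero => simp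
      | tmul f g => simp [Algebra.TensorProduct.tmul_mul_tmul]
      | add p q hp hq =>
        simp only [TensorProduct.map_tmul] at hp hq
        simp [TensorProduct.tmul_add, add_mul, mul_add, hp, hq]
    | add x y hx hy => simp [add_mul, hx, hy]
  have comp1 : TensorProduct.map (LinearMap.id : H →ₗ[K] H) Δ =
      (TensorProduct.map LinearMap.id (LinearMap.mulLeft K F)) ∘ₗ
        (TensorProduct.map LinearMap.id (LinearMap.mulRight K Finv)) ∘ₗ D₂ := by
    simp only [D₂, Δ, ← TensorProduct.map_comp, LinearMap.id_comp]
  have expand : TensorProduct.map (LinearMap.id : H →ₗ[K] H) Δ F =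
      ((1:H) ⊗ₜ[K] F) * (D₂ F * ((1:H) ⊗ₜ[K] Finv)) := by
    rw [comp1]
    simp only [LinearMap.comp_apply, keyR, keyL]
  have hF23 : F₂₃ = (1:H) ⊗ₜ[K] F := rfl
  have h2' : ((1:H) ⊗ₜ[K] F) * (D₂ F * ((1:H) ⊗ₜ[K] Finv)) = F₁₂ * F₁₃ := by
    rw [← expand]; exact h2
  have step : ((1:H) ⊗ₜ[K] F) * (D₂ F * ((1:H) ⊗ₜ[K] Finv)) * F₂₃ = F₁₂ * F₁₃ * F₂₃ := by
    rw [h2']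
  rw [hF23] at h1 step ⊢
  rw [mul_assoc (F₁₂) F₁₃, ← h1] at step
  rw [← step, mul_assoc, mul_assoc, Algebra.TensorProduct.tmul_mul_tmul, hinv₂, one_mul,
    ← Algebra.TensorProduct.one_def, mul_one]
end

section
/- If H₀ is a cocommutative Hopf algebra and 𝓕 is a twist (satisfying the cocycle and counit conditions), then R := 𝓕₂₁ 𝓕⁻¹ satisfies R Δ(x) = Δᵒᵖ(x) R for all x, where Δ = 𝓕 Δ₀ 𝓕⁻¹ and Δᵒᵖ = τ∘Δ, and R is invertible with R⁻¹ = 𝓕 𝓕₂₁⁻¹ (triangularity: R₂₁ = R⁻¹). -/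
open TensorProduct

/-- if H₀ is a cocommutative Hopf algebra and 𝓕 a twist, then
R := 𝓕₂₁𝓕⁻¹ intertwines the twisted coproduct with its opposite, is invertible
with inverse 𝓕𝓕₂₁⁻¹, and is triangular: R₂₁ = R⁻¹. -/
theorem stmt8 {K : Type*} [Field K] {H : Type*} [Ring H] [HopfAlgebra K H]
    (hcocomm : ∀ x : H,
      (TensorProduct.comm K H H) (Coalgebra.comul x) = (Coalgebra.comul x : H ⊗[K] H))
    (F Finv : H ⊗[K] H) (hinv₁ : F * Finv = 1) (hinv₂ : Finv * F = 1) :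
    let D₁ : H ⊗[K] H →ₗ[K] H ⊗[K] (H ⊗[K] H) :=
      (TensorProduct.assoc K H H H).toLinearMap ∘ₗ
        (TensorProduct.map Coalgebra.comul LinearMap.id)
    let D₂ : H ⊗[K] H →ₗ[K] H ⊗[K] (H ⊗[K] H) :=
      TensorProduct.map LinearMap.id Coalgebra.comul
    let Δ : H →ₗ[K] H ⊗[K] H :=
      LinearMap.mulLeft K F ∘ₗ LinearMap.mulRight K Finv ∘ₗ Coalgebra.comul
    let F₁₂ : H ⊗[K] (H ⊗[K] H) :=
      (Algebra.TensorProduct.map (AlgHom.id K H) Algebra.TensorProduct.includeLeft) F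
    let F₂₃ : H ⊗[K] (H ⊗[K] H) := Algebra.TensorProduct.includeRight F
    let τ : H ⊗[K] H ≃ₐ[K] H ⊗[K] H := Algebra.TensorProduct.comm K H H
    let R : H ⊗[K] H := τ F * Finv
    F₁₂ * D₁ F = F₂₃ * D₂ F →
    (TensorProduct.lid K H) ((TensorProduct.map Coalgebra.counit LinearMap.id) F) = 1 →
    (TensorProduct.rid K H) ((TensorProduct.map LinearMap.id Coalgebra.counit) F) = 1 →
    ((∀ x : H, R * Δ x = τ (Δ x) * R) ∧
     R * (F * τ Finv) = 1 ∧ (F * τ Finv) * R = 1 ∧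
     τ R = F * τ Finv) := by

  intro D₁ D₂ Δ F₁₂ F₂₃ τ R _ _ _
  have hτc : ∀ x : H, τ (Coalgebra.comul x) = (Coalgebra.comul x : H ⊗[K] H) := hcocomm
  have hττ : ∀ y : H ⊗[K] H, τ (τ y) = y := by
    intro y
    induction y using TensorProduct.induction_on with
    | zero => simp
    | tmul a b => simp [τ, Algebra.TensorProduct.comm_tmul]
    | add a b ha hb => simp [map_add, ha, hb]
  have hτF : τ Finv * τ F = 1 := by rw [← map_mul, hinv₂, map_one]
  have hτF' : τ F * τ Finv = 1 := by rw [← map_mul, hinv₁, map_one]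
  have hΔ : ∀ x : H, Δ x = F * ((Coalgebra.comul x : H ⊗[K] H) * Finv) := fun x => rfl
  refine ⟨?_, ?_, ?_, ?_⟩
  · intro x
    have hτΔ : τ (Δ x) = τ F * ((Coalgebra.comul x : H ⊗[K] H) * τ Finv) := by
      rw [hΔ, map_mul, map_mul, hτc]
    rw [hτΔ, hΔ]
    calc R * (F * ((Coalgebra.comul x : H ⊗[K] H) * Finv))
        = τ F * (Finv * F) * ((Coalgebra.comul x : H ⊗[K] H) * Finv) := by simp only [R, mul_assoc]
      _ = τ F * ((Coalgebra.comul x : H ⊗[K] H) * Finv) := by rw [hinv₂, mul_one]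
      _ = τ F * ((Coalgebra.comul x : H ⊗[K] H) * ((τ Finv * τ F) * Finv)) := by
            rw [hτF, one_mul]
      _ = τ F * ((Coalgebra.comul x : H ⊗[K] H) * τ Finv) * (τ F * Finv) := by simp only [R, mul_assoc]
  · show τ F * Finv * (F * τ Finv) = 1
    rw [mul_assoc, ← mul_assoc Finv, hinv₂, one_mul, hτF']
  · show F * τ Finv * (τ F * Finv) = 1
    rw [mul_assoc, ← mul_assoc (τ Finv), hτF, one_mul, hinv₁]
  · show τ (τ F * Finv) = F * τ Finv
    rw [map_mul, hττ]
end

section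
/- In the six-dimensional Lie algebra 𝒜, the derived subalgebra [𝒜,𝒜] equals the span of {E₁, E₂, A, B}, and the center of 𝒜 is trivial. -/
/-- in the six-dimensional Lie algebra 𝒜, the derived subalgebra
⁅𝒜,𝒜⁆ is span{E₁,E₂,A,B} and the center is trivial. -/
theorem stmt14 {L : Type*} [LieRing L] [LieAlgebra ℂ L]
    (H₁ H₂ E₁ E₂ A B : L)
    (hind : LinearIndependent ℂ ![H₁, H₂, E₁, E₂, A, B])
    (hspan : Submodule.span ℂ {H₁, H₂, E₁, E₂, A, B} = ⊤)
    (h1 : ⁅H₁, E₁⁆ = (2 : ℂ) • E₁) (h2 : ⁅H₂, E₂⁆ = (2 : ℂ) • E₂)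
    (h3 : ⁅H₁, H₂⁆ = 0) (h4 : ⁅E₁, E₂⁆ = 0) (h5 : ⁅H₁, E₂⁆ = 0) (h6 : ⁅H₂, E₁⁆ = 0)
    (h7 : ⁅H₁, A⁆ = -A) (h8 : ⁅H₁, B⁆ = B) (h9 : ⁅H₂, A⁆ = A) (h10 : ⁅H₂, B⁆ = B)
    (h11 : ⁅A, E₁⁆ = (2 : ℂ) • B) (h12 : ⁅A, E₂⁆ = 0) (h13 : ⁅E₁, B⁆ = 0)
    (h14 : ⁅E₂, B⁆ = 0) (h15 : ⁅A, B⁆ = E₂) :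
    (LieAlgebra.derivedSeries ℂ L 1).toSubmodule = Submodule.span ℂ {E₁, E₂, A, B} ∧
    LieAlgebra.center ℂ L = ⊥ := by
  -- reversed brackets
  have r1 : ⁅E₁, H₁⁆ = -((2:ℂ) • E₁) := by rw [← lie_skew, h1]
  have r2 : ⁅E₂, H₂⁆ = -((2:ℂ) • E₂) := by rw [← lie_skew, h2]
  have r3 : ⁅H₂, H₁⁆ = 0 := by rw [← lie_skew, h3, neg_zero]
  have r4 : ⁅E₂, E₁⁆ = 0 := by rw [← lie_skew, h4, neg_zero]
  have r5 : ⁅E₂, H₁⁆ = 0 := by rw [← lie_skew, h5, neg_zero]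
  have r6 : ⁅E₁, H₂⁆ = 0 := by rw [← lie_skew, h6, neg_zero]
  have r7 : ⁅A, H₁⁆ = A := by rw [← lie_skew, h7, neg_neg]
  have r8 : ⁅B, H₁⁆ = -B := by rw [← lie_skew, h8]
  have r9 : ⁅A, H₂⁆ = -A := by rw [← lie_skew, h9]
  have r10 : ⁅B, H₂⁆ = -B := by rw [← lie_skew, h10]
  have r11 : ⁅E₁, A⁆ = -((2:ℂ) • B) := by rw [← lie_skew, h11]
  have r12 : ⁅E₂, A⁆ = 0 := by rw [← lie_skew, h12, neg_zero]
  have r13 : ⁅B, E₁⁆ = 0 := by rw [← lie_skew, h13, neg_zero]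
  have r14 : ⁅B, E₂⁆ = 0 := by rw [← lie_skew, h14, neg_zero]
  have r15 : ⁅B, A⁆ = -E₂ := by rw [← lie_skew, h15]
  set S := Submodule.span ℂ ({E₁, E₂, A, B} : Set L) with hSdef
  have hE1 : E₁ ∈ S := Submodule.subset_span (by simp)
  have hE2 : E₂ ∈ S := Submodule.subset_span (by simp)
  have hA : A ∈ S := Submodule.subset_span (by simp)
  have hB : B ∈ S := Submodule.subset_span (by simp)
  have hmem : ∀ x : L, x ∈ Submodule.span ℂ ({H₁, H₂, E₁, E₂, A, B} : Set L) :=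
    fun x => hspan ▸ Submodule.mem_top
  have key1 : ∀ x ∈ ({H₁, H₂, E₁, E₂, A, B} : Set L), ∀ y : L, ⁅x, y⁆ ∈ S := by
    intro x hx y
    induction hmem y using Submodule.span_induction with
    | mem z hz =>
      simp only [Set.mem_insert_iff, Set.mem_singleton_iff] at hx hz
      rcases hx with rfl|rfl|rfl|rfl|rfl|rfl <;> rcases hz with rfl|rfl|rfl|rfl|rfl|rfl <;>
        simp only [h1,h2,h3,h4,h5,h6,h7,h8,h9,h10,h11,h12,h13,h14,h15,
          r1,r2,r3,r4,r5,r6,r7,r8,r9,r10,r11,r12,r13,r14,r15, lie_self] <;>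
        first
          | exact S.zero_mem
          | exact hA | exact hB | exact hE2
          | exact S.neg_mem hA | exact S.neg_mem hB | exact S.neg_mem hE2
          | exact S.smul_mem _ hE1 | exact S.smul_mem _ hE2 | exact S.smul_mem _ hB
          | exact S.neg_mem (S.smul_mem _ hE1) | exact S.neg_mem (S.smul_mem _ hE2)
          | exact S.neg_mem (S.smul_mem _ hB)
    | zero => simp
    | add a b _ _ ha hb => rw [lie_add]; exact S.add_mem ha hb
    | smul c a _ ha => rw [lie_smul]; exact S.smul_mem c ha
  have key : ∀ x y : L, ⁅x, y⁆ ∈ S := by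
    intro x y
    induction hmem x using Submodule.span_induction with
    | mem z hz => exact key1 z hz y
    | zero => simp
    | add a b _ _ ha hb => rw [add_lie]; exact S.add_mem ha hb
    | smul c a _ ha => rw [smul_lie]; exact S.smul_mem c ha
  have hds : LieAlgebra.derivedSeries ℂ L 1 = ⁅(⊤ : LieIdeal ℂ L), (⊤ : LieIdeal ℂ L)⁆ := by
    simp [LieAlgebra.derivedSeries_def, LieAlgebra.derivedSeriesOfIdeal_succ,
      LieAlgebra.derivedSeriesOfIdeal_zero]
  have hb : ∀ x y : L, ⁅x, y⁆ ∈ LieAlgebra.derivedSeries ℂ L 1 := by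
    intro x y
    rw [hds]
    exact LieSubmodule.lie_mem_lie (LieSubmodule.mem_top x) (LieSubmodule.mem_top y)
  constructor
  · apply le_antisymm
    · rw [hds, LieSubmodule.lieIdeal_oper_eq_linear_span, Submodule.span_le]
      rintro m ⟨x, n, rfl⟩
      exact key x n
    · have f1 : E₁ ∈ LieAlgebra.derivedSeries ℂ L 1 := by
        have h : ((2:ℂ)⁻¹) • ⁅H₁, E₁⁆ ∈ LieAlgebra.derivedSeries ℂ L 1 :=
          (LieAlgebra.derivedSeries ℂ L 1).smul_mem _ (hb H₁ E₁)
        rw [h1, smul_smul] at h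
        norm_num at h
        exact h
      have f2 : E₂ ∈ LieAlgebra.derivedSeries ℂ L 1 := h15 ▸ hb A B
      have f3 : A ∈ LieAlgebra.derivedSeries ℂ L 1 := by
        have h : -⁅H₁, A⁆ ∈ LieAlgebra.derivedSeries ℂ L 1 :=
          (LieAlgebra.derivedSeries ℂ L 1).neg_mem (hb H₁ A)
        rw [h7, neg_neg] at h
        exact h
      have f4 : B ∈ LieAlgebra.derivedSeries ℂ L 1 := h8 ▸ hb H₁ B
      rw [Submodule.span_le]
      rintro w hw
      simp only [Set.mem_insert_iff, Set.mem_singleton_iff] at hw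
      rcases hw with h|h|h|h
      exacts [h ▸ f1, h ▸ f2, h ▸ f3, h ▸ f4]
  · rw [eq_bot_iff]
    intro z hz
    rw [LieSubmodule.mem_bot]
    have hzc : ∀ x : L, ⁅x, z⁆ = 0 := (LieModule.mem_maxTrivSubmodule ℂ L L z).mp hz
    have hrange : Set.range ![H₁, H₂, E₁, E₂, A, B] = ({H₁, H₂, E₁, E₂, A, B} : Set L) := by
      ext w; simp [Fin.exists_fin_succ]; tauto
    obtain ⟨c, hc⟩ := (Submodule.mem_span_range_iff_exists_fun ℂ).mp (by rw [hrange]; exact hmem z)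
    rw [Fin.sum_univ_six] at hc
    have hc' : c 0 • H₁ + c 1 • H₂ + c 2 • E₁ + c 3 • E₂ + c 4 • A + c 5 • B = z := hc
    have ind := Fintype.linearIndependent_iff.mp hind
    -- bracket with E₁
    have e1 : ⁅E₁, z⁆ = 0 := hzc E₁
    rw [← hc'] at e1
    simp only [lie_add, lie_smul, r1, r6, lie_self, h4, r11, h13, smul_neg, smul_zero,
      add_zero, zero_add, smul_smul] at e1
    have e1' : ∑ i, (![0, 0, -(c 0 * 2), 0, 0, -(c 4 * 2)] : Fin 6 → ℂ) i •
        ![H₁, H₂, E₁, E₂, A, B] i = 0 := by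
      rw [Fin.sum_univ_six]
      show (0:ℂ) • H₁ + (0:ℂ) • H₂ + (-(c 0 * 2)) • E₁ + (0:ℂ) • E₂ + (0:ℂ) • A +
        (-(c 4 * 2)) • B = 0
      linear_combination (norm := module) e1
    have hc0 : c 0 = 0 := by
      have h : -(c 0 * 2) = 0 := ind _ e1' 2
      simpa using h
    have hc4 : c 4 = 0 := by
      have h : -(c 4 * 2) = 0 := ind _ e1' 5
      simpa using h
    -- bracket with A
    have e2 : ⁅A, z⁆ = 0 := hzc A
    rw [← hc'] at e2
    simp only [lie_add, lie_smul, r7, r9, h11, h12, lie_self, h15, smul_neg, smul_zero,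
      add_zero, zero_add, smul_smul] at e2
    have e2' : ∑ i, (![0, 0, 0, c 5, c 0 - c 1, c 2 * 2] : Fin 6 → ℂ) i •
        ![H₁, H₂, E₁, E₂, A, B] i = 0 := by
      rw [Fin.sum_univ_six]
      show (0:ℂ) • H₁ + (0:ℂ) • H₂ + (0:ℂ) • E₁ + (c 5) • E₂ + (c 0 - c 1) • A +
        (c 2 * 2) • B = 0
      linear_combination (norm := module) e2
    have hc5 : c 5 = 0 := ind _ e2' 3
    have hc1 : c 1 = 0 := by
      have h : c 0 - c 1 = 0 := ind _ e2' 4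
      linear_combination hc0 - h
    have hc2 : c 2 = 0 := by
      have h : c 2 * 2 = 0 := ind _ e2' 5
      simpa using h
    -- bracket with H₂
    have e3 : ⁅H₂, z⁆ = 0 := hzc H₂
    rw [← hc'] at e3
    simp only [lie_add, lie_smul, r3, lie_self, h6, h2, h9, h10, smul_zero,
      add_zero, zero_add, smul_smul] at e3
    have e3' : ∑ i, (![0, 0, 0, c 3 * 2, c 4, c 5] : Fin 6 → ℂ) i •
        ![H₁, H₂, E₁, E₂, A, B] i = 0 := by
      rw [Fin.sum_univ_six]
      show (0:ℂ) • H₁ + (0:ℂ) • H₂ + (0:ℂ) • E₁ + (c 3 * 2) • E₂ + (c 4) • A +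
        (c 5) • B = 0
      linear_combination (norm := module) e3
    have hc3 : c 3 = 0 := by
      have h : c 3 * 2 = 0 := ind _ e3' 3
      simpa using h
    rw [← hc', hc0, hc1, hc2, hc3, hc4, hc5]
    simp
end
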